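/- Let n ≥ 1 and let μ be a Borel probability measure on ℝⁿ (the joint distribution of n observables X₁,…,Xₙ). Then there exist a probability space Ω, real-valued random variables X₁,…,Xₙ on Ω, and a random variable Λ : Ω → ℝⁿ such that: (a) the law of the vector (X₁,…,Xₙ) is μ; (b) each Xᵢ is measurable with respect to the σ-algebra generated by Λ (so Λ is deterministic: the conditional variance of each Xᵢ given Λ is zero almost surely); and (c) X₁,…,Xₙ are conditionally independent given the σ-algebra generated by Λ. In particular, a factorizing hidden variable exists whenever the observables have a joint probability distribution. -/

import Mathlib

/-!
Take the observables themselves as the hidden variable: `Ω = ℝⁿ`, `P = μ`, `Xᵢ` the coordinates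
and `Λ = id`. Every event is then `σ(Λ)`-measurable, so its conditional probability given `σ(Λ)`
is its own indicator, and indicators of an intersection multiply.
-/

open MeasureTheory

theorem condExp_indicator_iInter_eq_prod_of_measurableSet {Ω ι : Type*} [Fintype ι]
    {m mΩ : MeasurableSpace Ω} (hm : m ≤ mΩ) {P : Measure Ω} [IsFiniteMeasure P]
    {A : ι → Set Ω} (hA : ∀ i, MeasurableSet[m] (A i)) :
    P[(⋂ i, A i).indicator fun _ => (1 : ℝ) | m] =
      fun ω => ∏ i, P[(A i).indicator fun _ => (1 : ℝ) | m] ω := by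
  have condExp_self : ∀ s, MeasurableSet[m] s →
      P[s.indicator fun _ => (1 : ℝ) | m] = s.indicator fun _ => 1 :=
    fun s hs => condExp_of_stronglyMeasurable hm (stronglyMeasurable_const.indicator hs)
      ((integrable_const 1).indicator (hm s hs))
  ext ω
  rw [condExp_self _ (MeasurableSet.iInter hA)]
  simp_rw [condExp_self _ (hA _), prod_indicator_const_apply]
  simp [Pi.pow_def]

theorem factorizing_hidden_variable_exists
    (n : ℕ) (μ : Measure (Fin n → ℝ)) [IsProbabilityMeasure μ] :
    ∃ (Ω : Type) (mΩ : MeasurableSpace Ω) (P : @Measure Ω mΩ)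
      (_ : @IsProbabilityMeasure Ω mΩ P) (X : Fin n → Ω → ℝ) (Λ : Ω → (Fin n → ℝ)),
      (∀ i, Measurable[mΩ] (X i)) ∧
      Measurable[mΩ] Λ ∧
      -- (a) the law of the random vector (X₁, …, Xₙ) is μ
      @Measure.map Ω (Fin n → ℝ) mΩ _ (fun ω i => X i ω) P = μ ∧
      -- (b) each Xᵢ is measurable w.r.t. the σ-algebra generated by Λ (Λ is deterministic)
      (∀ i, Measurable[MeasurableSpace.comap Λ inferInstance] (X i)) ∧
      -- (c) X₁, …, Xₙ are conditionally independent given σ(Λ)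
      (∀ B : Fin n → Set ℝ, (∀ i, MeasurableSet (B i)) →
        MeasureTheory.condExp (MeasurableSpace.comap Λ inferInstance) P
            ((⋂ i, X i ⁻¹' B i).indicator fun _ => (1 : ℝ))
          =ᵐ[P] fun ω => ∏ i,
            MeasureTheory.condExp (MeasurableSpace.comap Λ inferInstance) P
              ((X i ⁻¹' B i).indicator fun _ => (1 : ℝ)) ω) := by
  refine ⟨Fin n → ℝ, inferInstance, μ, inferInstance, fun i ω => ω i, id,
    measurable_pi_apply, measurable_id, Measure.map_id, ?_, fun B hB => ?_⟩
  all_goals rw [MeasurableSpace.comap_id]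
  · exact measurable_pi_apply
  · exact .of_eq <| condExp_indicator_iInter_eq_prod_of_measurableSet le_rfl
      fun i => measurable_pi_apply i (hB i)
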